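/- arXiv:1407.2095 — 2 statements merged into one kernel-verified Lean document; each statement's English description precedes it below -/
import Mathlib

section
/- Let N = 2M, θ ∈ ℝ with cos θ ≠ 0, suppose the I-OEE relations L_{k+M} = L_k, B_k = β_{k+M}, B_{k+M} = β_k hold for k = 1..M, and suppose the continuity constraint ∑_{k=1}^{M} L_k(cos β_k + cos β_{k+M}) = 0 holds. Define Δx_k, Δy_k as usual and choose Δz_k with Δz_k² = L_k² - Δx_k² - Δy_k² for k = 1..M and Δz_{k+M} = -Δz_k. Then ∑_{k=1}^{N} Δx_k = 0, ∑_{k=1}^{N} Δy_k = 0, and ∑_{k=1}^{N} Δz_k = 0; i.e., the juncture polygon closes for every value of θ. -/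
/-!
The edges `k` and `k + M` are swapped by the I-OEE relations, so the sums are computed pairwise.
The `x`-components of paired edges cancel identically and the `z`-components cancel by choice,
while the `y`-components of a pair add up to `-L k (cos β k + cos β (k + M)) / cos θ`,
whose sum over `k` vanishes by the continuity constraint.
-/

open Finset

lemma sum_Icc_two_mul_eq_sum_add {α : Type*} [AddCommMonoid α] (M : ℕ) (f : ℕ → α) :
    ∑ k ∈ Icc 1 (2 * M), f k = ∑ k ∈ Icc 1 M, (f k + f (k + M)) := by
  have h_split : Icc 1 (2 * M) = Icc 1 M ∪ Icc (M + 1) (2 * M) := by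
    ext a; simp only [mem_Icc, mem_union]; omega
  have h_shift : Icc (M + 1) (2 * M) = (Icc 1 M).map (addRightEmbedding M) := by
    rw [map_add_right_Icc]
    congr 1 <;> omega
  have h_disj : Disjoint (Icc 1 M) (Icc (M + 1) (2 * M)) :=
    disjoint_left.2 fun a ha hb => by simp only [mem_Icc] at ha hb; omega
  rw [sum_add_distrib, h_split, sum_union h_disj, h_shift, sum_map]
  rfl

section PairedEdges

variable {M : ℕ} {θ : ℝ} {L β B : ℕ → ℝ}
  (hL : ∀ k, L (k + M) = L k) (hβ : ∀ k, B k = β (k + M)) (hB : ∀ k, B (k + M) = β k)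
include hL hβ hB

lemma paired_dx_add_eq_zero (k : ℕ) :
    L k * (Real.cos (B k) - Real.cos (β k)) / (2 * Real.cos θ)
      + L (k + M) * (Real.cos (B (k + M)) - Real.cos (β (k + M))) / (2 * Real.cos θ) = 0 := by
  rw [hL, hB, hβ]
  ring

lemma paired_dy_add (k : ℕ) :
    -(L k * (Real.cos (B k) + Real.cos (β k))) / (2 * Real.cos θ)
      + -(L (k + M) * (Real.cos (B (k + M)) + Real.cos (β (k + M)))) / (2 * Real.cos θ)
      = L k * (Real.cos (β k) + Real.cos (β (k + M))) * -(Real.cos θ)⁻¹ := by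
  rw [hL, hB, hβ]
  ring

end PairedEdges

theorem stmt8_general (M N : ℕ) (hN : N = 2 * M)
    (θ : ℝ)
    (L β B Δx Δy Δz : ℕ → ℝ)
    (hL : ∀ k, L (k + M) = L k)
    (hβ : ∀ k, B k = β (k + M))
    (hB : ∀ k, B (k + M) = β k)
    (hcont : ∑ k ∈ Icc 1 M, L k * (Real.cos (β k) + Real.cos (β (k + M))) = 0)
    (hx : ∀ k, Δx k = L k * (Real.cos (B k) - Real.cos (β k)) / (2 * Real.cos θ))
    (hy : ∀ k, Δy k = -(L k * (Real.cos (B k) + Real.cos (β k))) / (2 * Real.cos θ))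
    (hz' : ∀ k, 1 ≤ k → k ≤ M → Δz (k + M) = -Δz k) :
    (∑ k ∈ Icc 1 N, Δx k = 0) ∧ (∑ k ∈ Icc 1 N, Δy k = 0) ∧
    (∑ k ∈ Icc 1 N, Δz k = 0) := by
  subst hN
  simp only [sum_Icc_two_mul_eq_sum_add, hx, hy]
  refine ⟨?_, ?_, ?_⟩
  · exact sum_eq_zero fun k _ => paired_dx_add_eq_zero hL hβ hB k
  · simp only [paired_dy_add hL hβ hB, ← sum_mul, hcont, zero_mul]
  · refine sum_eq_zero fun k hk => ?_
    obtain ⟨hk₁, hk₂⟩ := mem_Icc.1 hk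
    rw [hz' k hk₁ hk₂, add_neg_cancel]

theorem stmt8 (M N : ℕ) (hM : 1 ≤ M) (hN : N = 2 * M)
    (θ : ℝ) (hθ : Real.cos θ ≠ 0)
    (L β B Δx Δy Δz : ℕ → ℝ)
    (hL : ∀ k, L (k + M) = L k)
    (hβ : ∀ k, B k = β (k + M))
    (hB : ∀ k, B (k + M) = β k)
    (hcont : ∑ k ∈ Icc 1 M, L k * (Real.cos (β k) + Real.cos (β (k + M))) = 0)
    (hx : ∀ k, Δx k = L k * (Real.cos (B k) - Real.cos (β k)) / (2 * Real.cos θ))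
    (hy : ∀ k, Δy k = -(L k * (Real.cos (B k) + Real.cos (β k))) / (2 * Real.cos θ))
    (hz : ∀ k, 1 ≤ k → k ≤ M → Δz k ^ 2 = L k ^ 2 - Δx k ^ 2 - Δy k ^ 2)
    (hz' : ∀ k, 1 ≤ k → k ≤ M → Δz (k + M) = -Δz k) :
    (∑ k ∈ Icc 1 N, Δx k = 0) ∧ (∑ k ∈ Icc 1 N, Δy k = 0) ∧
    (∑ k ∈ Icc 1 N, Δz k = 0) :=
  stmt8_general M N hN θ L β B Δx Δy Δz hL hβ hB hcont hx hy hz'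
end

section
/- Let N = 2M, M ≥ 2, and suppose the III-OAE relations hold with L odd, L = 2k_x + 1 (so β_{2k-1} = β, B_{2k-1} = B for k ≤ k_x, β_{2k-1} = π - β, B_{2k-1} = π - B for k > k_x, β_{2k} = π - B, B_{2k} = π - β for k ≤ k_x, β_{2k} = B, B_{2k} = β for k > k_x). If ∑_{k=1}^{k_x} L_{2k} = ∑_{k=k_x+1}^{M} L_{2k} and ∑_{k=1}^{k_x} L_{2k-1} = ∑_{k=k_x+1}^{M} L_{2k-1}, then ∑_{k=1}^{N} L_k cos β_k = 0 and ∑_{k=1}^{N} L_k cos B_k = 0. -/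
/-!
Group the terms of each closure sum into consecutive (odd, even) pairs. Since
`cos (π - x) = - cos x`, the angle pattern turns every pair below the index `k_x` into
`L_{2k-1} cos x - L_{2k} cos y` and every pair above it into the same expression with the
opposite sign, where `(x, y) = (β, B)` for the first sum and `(B, β)` for the second. The
total is therefore a combination of `cos x` and `cos y` whose coefficients are the
differences of the partial length sums, which vanish by hypothesis.
-/

open Finset Real

theorem sum_Icc_one_add_sum_Icc_succ {M : Type*} [AddCommMonoid M] (f : ℕ → M) {m n : ℕ}
    (hmn : m ≤ n) : ∑ k ∈ Icc 1 m, f k + ∑ k ∈ Icc (m + 1) n, f k = ∑ k ∈ Icc 1 n, f k := by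
  simpa only [← Icc_add_one_left_eq_Ioc, zero_add] using
    sum_Ioc_consecutive f (Nat.zero_le m) hmn

theorem sum_Icc_one_two_mul {M : Type*} [AddCommMonoid M] (f : ℕ → M) (n : ℕ) :
    ∑ k ∈ Icc 1 (2 * n), f k = ∑ k ∈ Icc 1 n, (f (2 * k - 1) + f (2 * k)) := by
  induction n with
  | zero => simp
  | succ n ih =>
    rw [show 2 * (n + 1) = 2 * n + 1 + 1 by ring, sum_Icc_succ_top (by omega),
      sum_Icc_succ_top (by omega), sum_Icc_succ_top (by omega), ih, add_assoc,
      show 2 * (n + 1) - 1 = 2 * n + 1 by omega, show 2 * (n + 1) = 2 * n + 1 + 1 by ring]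

theorem sum_mul_cos_of_supplementary_pattern (L θ : ℕ → ℝ) (x y : ℝ) {m n : ℕ} (hmn : m ≤ n)
    (hlow : ∀ k ∈ Icc 1 m, θ (2 * k - 1) = x ∧ θ (2 * k) = π - y)
    (hhigh : ∀ k ∈ Icc (m + 1) n, θ (2 * k - 1) = π - x ∧ θ (2 * k) = y) :
    ∑ k ∈ Icc 1 (2 * n), L k * cos (θ k) =
      (∑ k ∈ Icc 1 m, L (2 * k - 1) - ∑ k ∈ Icc (m + 1) n, L (2 * k - 1)) * cos x -
      (∑ k ∈ Icc 1 m, L (2 * k) - ∑ k ∈ Icc (m + 1) n, L (2 * k)) * cos y := by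
  have hlow_pair : ∀ k ∈ Icc 1 m, L (2 * k - 1) * cos (θ (2 * k - 1)) + L (2 * k) * cos (θ (2 * k))
      = L (2 * k - 1) * cos x - L (2 * k) * cos y := fun k hk => by
    rw [(hlow k hk).1, (hlow k hk).2, cos_pi_sub]; ring
  have hhigh_pair : ∀ k ∈ Icc (m + 1) n,
      L (2 * k - 1) * cos (θ (2 * k - 1)) + L (2 * k) * cos (θ (2 * k))
      = -(L (2 * k - 1) * cos x - L (2 * k) * cos y) := fun k hk => by
    rw [(hhigh k hk).1, (hhigh k hk).2, cos_pi_sub]; ring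
  rw [sum_Icc_one_two_mul, ← sum_Icc_one_add_sum_Icc_succ _ hmn, sum_congr rfl hlow_pair,
    sum_congr rfl hhigh_pair, sum_neg_distrib, sum_sub_distrib, sum_sub_distrib,
    ← sum_mul, ← sum_mul, ← sum_mul, ← sum_mul]
  ring

theorem stmt15_general (M N kx : ℕ) (hN : N = 2 * M)
    (hkx' : 2 * kx + 1 ≤ N - 2)
    (b Bb : ℝ) (L β B : ℕ → ℝ)
    (hodd1 : ∀ k, 1 ≤ k → k ≤ kx → β (2 * k - 1) = b ∧ B (2 * k - 1) = Bb)
    (hodd2 : ∀ k, kx + 1 ≤ k → k ≤ M →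
      β (2 * k - 1) = Real.pi - b ∧ B (2 * k - 1) = Real.pi - Bb)
    (heven1 : ∀ k, 1 ≤ k → k ≤ kx →
      β (2 * k) = Real.pi - Bb ∧ B (2 * k) = Real.pi - b)
    (heven2 : ∀ k, kx + 1 ≤ k → k ≤ M → β (2 * k) = Bb ∧ B (2 * k) = b)
    (hlen1 : ∑ k ∈ Icc 1 kx, L (2 * k) = ∑ k ∈ Icc (kx + 1) M, L (2 * k))
    (hlen2 : ∑ k ∈ Icc 1 kx, L (2 * k - 1) = ∑ k ∈ Icc (kx + 1) M, L (2 * k - 1)) :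
    ∑ k ∈ Icc 1 N, L k * Real.cos (β k) = 0 ∧
    ∑ k ∈ Icc 1 N, L k * Real.cos (B k) = 0 := by
  have hkxM : kx ≤ M := by omega
  subst hN
  constructor
  · rw [sum_mul_cos_of_supplementary_pattern L β b Bb hkxM, hlen1, hlen2, sub_self, sub_self,
      zero_mul, zero_mul, sub_zero]
    · intro k hk; rw [mem_Icc] at hk; exact ⟨(hodd1 k hk.1 hk.2).1, (heven1 k hk.1 hk.2).1⟩
    · intro k hk; rw [mem_Icc] at hk; exact ⟨(hodd2 k hk.1 hk.2).1, (heven2 k hk.1 hk.2).1⟩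
  · rw [sum_mul_cos_of_supplementary_pattern L B Bb b hkxM, hlen1, hlen2, sub_self, sub_self,
      zero_mul, zero_mul, sub_zero]
    · intro k hk; rw [mem_Icc] at hk; exact ⟨(hodd1 k hk.1 hk.2).2, (heven1 k hk.1 hk.2).2⟩
    · intro k hk; rw [mem_Icc] at hk; exact ⟨(hodd2 k hk.1 hk.2).2, (heven2 k hk.1 hk.2).2⟩

theorem stmt15 (M N kx : ℕ) (hM : 2 ≤ M) (hN : N = 2 * M) (hkx : 1 ≤ kx)
    (hkx' : 2 * kx + 1 ≤ N - 2)
    (b Bb : ℝ) (L β B : ℕ → ℝ)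
    (hodd1 : ∀ k, 1 ≤ k → k ≤ kx → β (2 * k - 1) = b ∧ B (2 * k - 1) = Bb)
    (hodd2 : ∀ k, kx + 1 ≤ k → k ≤ M →
      β (2 * k - 1) = Real.pi - b ∧ B (2 * k - 1) = Real.pi - Bb)
    (heven1 : ∀ k, 1 ≤ k → k ≤ kx →
      β (2 * k) = Real.pi - Bb ∧ B (2 * k) = Real.pi - b)
    (heven2 : ∀ k, kx + 1 ≤ k → k ≤ M → β (2 * k) = Bb ∧ B (2 * k) = b)
    (hlen1 : ∑ k ∈ Icc 1 kx, L (2 * k) = ∑ k ∈ Icc (kx + 1) M, L (2 * k))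
    (hlen2 : ∑ k ∈ Icc 1 kx, L (2 * k - 1) = ∑ k ∈ Icc (kx + 1) M, L (2 * k - 1)) :
    ∑ k ∈ Icc 1 N, L k * Real.cos (β k) = 0 ∧
    ∑ k ∈ Icc 1 N, L k * Real.cos (B k) = 0 :=
  stmt15_general M N kx hN hkx' b Bb L β B hodd1 hodd2 heven1 heven2 hlen1 hlen2
end
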